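/- Let n ≥ 2 be even and let μ ∈ ℝ satisfy a_{n/2−1}(μ) = 0. Then a_{n−1}(μ) = 0 and a_{n−2}(μ) = −1. -/

import Mathlib

/-!
`a μ n` is the Chebyshev polynomial `Uₙ` evaluated at `1 - μ`, so it satisfies the addition
formula `a (p + q + 2) = a (p + 1) a (q + 1) - a p a q` and Cassini's identity
`a (k + 1) ^ 2 - a k a (k + 2) = 1`. If `a (k + 1) = 0`, the recurrence gives `a (k + 2) = -a k`;
the addition formula then yields `a (2k + 3) = 0` and `a (2k + 2) = -a k ^ 2`, and Cassini's
identity gives `a k ^ 2 = 1`.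
-/

noncomputable def a (μ : ℝ) : ℕ → ℝ
  | 0 => 1
  | 1 => 2 * (1 - μ)
  | n + 2 => 2 * (1 - μ) * a μ (n + 1) - a μ n

namespace a

variable (μ : ℝ)

@[simp]
lemma zero : a μ 0 = 1 := rfl

@[simp]
lemma one : a μ 1 = 2 * (1 - μ) := rfl

lemma add_two (n : ℕ) : a μ (n + 2) = 2 * (1 - μ) * a μ (n + 1) - a μ n := rfl

lemma add_add_two (p q : ℕ) :
    a μ (p + q + 2) = a μ (p + 1) * a μ (q + 1) - a μ p * a μ q := by
  induction q using Nat.twoStepInduction with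
  | zero => rw [add_zero, add_two, zero_add, one, zero]; ring
  | one => rw [add_two, add_two μ p, add_two μ 0, one, zero]; ring
  | more q ih₀ ih₁ =>
    rw [← add_assoc, add_two, show p + q + 2 + 1 = p + (q + 1) + 2 by ring, ih₀, ih₁,
      add_two μ (q + 1), add_two μ q]
    ring

lemma sq_sub_mul_add_two (k : ℕ) : a μ (k + 1) ^ 2 - a μ k * a μ (k + 2) = 1 := by
  induction k with
  | zero => simp [add_two]; ring
  | succ k ih => rw [← ih, add_two μ (k + 1), add_two μ k]; ring

variable {μ}

lemma two_mul_add_one_eq_zero_and_two_mul_eq_neg_one {k : ℕ} (h : a μ k = 0) :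
    a μ (2 * k + 1) = 0 ∧ a μ (2 * k) = -1 := by
  obtain _ | k := k
  · simp at h
  have hk₂ : a μ (k + 2) = -a μ k := by rw [add_two, h]; ring
  have hk_sq : a μ k ^ 2 = 1 := by simpa [h, hk₂, ← sq] using sq_sub_mul_add_two μ k
  constructor
  · rw [show 2 * (k + 1) + 1 = k + (k + 1) + 2 by ring, add_add_two, h]; ring
  · rw [show 2 * (k + 1) = k + k + 2 by ring, add_add_two, h, ← hk_sq]; ring

end a

theorem stmt14_general (n : ℕ) (heven : Even n) (μ : ℝ)
    (h : a μ (n / 2 - 1) = 0) :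
    a μ (n - 1) = 0 ∧ a μ (n - 2) = -1 := by
  obtain ⟨m, rfl⟩ := heven
  obtain ⟨k, rfl⟩ : ∃ k, m = k + 1 := Nat.exists_eq_add_one.mpr <| Nat.pos_of_ne_zero <| by
    rintro rfl
    simp at h
  rw [show (k + 1 + (k + 1)) / 2 - 1 = k by omega] at h
  rw [show k + 1 + (k + 1) - 1 = 2 * k + 1 by omega, show k + 1 + (k + 1) - 2 = 2 * k by omega]
  exact a.two_mul_add_one_eq_zero_and_two_mul_eq_neg_one h

theorem stmt14 (n : ℕ) (hn : 2 ≤ n) (heven : Even n) (μ : ℝ)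
    (h : a μ (n / 2 - 1) = 0) :
    a μ (n - 1) = 0 ∧ a μ (n - 2) = -1 :=
  stmt14_general n heven μ h
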